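/- arXiv:2603.05166 — 3 statements merged into one kernel-verified Lean document; each statement's English description precedes it below -/
import Mathlib

section
/- Let {c_n} be a sequence of positive real numbers with c_0 = 1, and let M > 0. If the sequence of ratios c_n/c_{n-1} (for n ≥ 1) is non-decreasing and bounded above by M, then the power series f(z) = ∑_{n≥0} c_n z^n converges for all complex z with |z| < 1/M, and there exists a sequence of non-negative real numbers {q_n}_{n≥1} such that 1 - 1/f(z) = ∑_{n≥1} q_n z^n for all |z| < 1/M. -/
open Finset

noncomputable def kq (c : ℕ → ℝ) : ℕ → ℝ
  | 0 => 0
  | (n+1) => c (n+1) - ∑ k ∈ (Finset.range n).attach,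
      kq c (k.1+1) * c (n - k.1)
  decreasing_by exact Nat.succ_lt_succ (Finset.mem_range.mp k.2)

lemma kq_succ (c : ℕ → ℝ) (n : ℕ) :
    kq c (n+1) = c (n+1) - ∑ k ∈ Finset.range n, kq c (k+1) * c (n - k) := by
  rw [kq, ← Finset.sum_attach (Finset.range n) (fun k => kq c (k+1) * c (n-k))]

lemma c_eq_sum (c : ℕ → ℝ) (hc0 : c 0 = 1) (n : ℕ) :
    c (n+1) = ∑ k ∈ Finset.range (n+1), kq c (k+1) * c (n - k) := by
  rw [Finset.sum_range_succ, Nat.sub_self, hc0, mul_one, kq_succ]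
  ring

lemma ratio_mono (c : ℕ → ℝ)
    (hmono : ∀ n : ℕ, 1 ≤ n → c n / c (n - 1) ≤ c (n + 1) / c n) :
    ∀ a b : ℕ, 1 ≤ a → a ≤ b → c a / c (a-1) ≤ c b / c (b-1) := by
  intro a b ha hab
  induction b, hab using Nat.le_induction with
  | base => exact le_refl _
  | succ b hb ih =>
      refine ih.trans ?_
      have := hmono b (ha.trans hb)
      simpa using this

lemma kq_nonneg (c : ℕ → ℝ) (hpos : ∀ n, 0 < c n) (hc0 : c 0 = 1)
    (hmono : ∀ n : ℕ, 1 ≤ n → c n / c (n - 1) ≤ c (n + 1) / c n) :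
    ∀ n : ℕ, 0 ≤ kq c (n+1) := by
  intro n
  induction n using Nat.strong_induction_on with
  | _ n ih =>
    match n with
    | 0 =>
      have h := kq_succ c 0
      simp at h
      rw [h]; exact (hpos 1).le
    | (m+1) =>
      set r := c (m+2) / c (m+1) with hr
      have hcm : r * c (m+1) = c (m+2) := div_mul_cancel₀ _ (hpos (m+1)).ne'
      have h1 := kq_succ c (m+1)
      have h2 := kq_succ c m
      have expand : ∑ k ∈ Finset.range m, kq c (k+1) * (r * c (m-k) - c (m+1-k))
          = r * (∑ k ∈ Finset.range m, kq c (k+1) * c (m-k))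
            - ∑ k ∈ Finset.range m, kq c (k+1) * c (m+1-k) := by
        rw [Finset.mul_sum, ← Finset.sum_sub_distrib]
        exact Finset.sum_congr rfl fun k hk => by ring
      have key : kq c (m+2) = kq c (m+1) * (r - c 1)
          + ∑ k ∈ Finset.range m, kq c (k+1) * (r * c (m-k) - c (m+1-k)) := by
        rw [expand, h1, Finset.sum_range_succ,
          show m + 1 - m = 1 from by omega, h2, ← hcm]
        ring
      rw [key]
      have hq1 : 0 ≤ kq c (m+1) := ih m (by omega)
      have hrc : c 1 ≤ r := by
        have := ratio_mono c hmono 1 (m+2) le_rfl (by omega)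
        simpa [hc0] using this
      refine add_nonneg (mul_nonneg hq1 (by linarith)) (Finset.sum_nonneg ?_)
      intro k hk
      have hkm := Finset.mem_range.mp hk
      refine mul_nonneg (ih k (by omega)) ?_
      have h3 := ratio_mono c hmono (m+1-k) (m+2) (by omega) (by omega)
      rw [show m + 1 - k - 1 = m - k from by omega] at h3
      have h4 : c (m+1-k) / c (m-k) ≤ r := by simpa using h3
      have h5 := (div_le_iff₀ (hpos (m-k))).mp h4
      linarith

lemma kq_le (c : ℕ → ℝ) (hpos : ∀ n, 0 < c n) (hc0 : c 0 = 1)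
    (hmono : ∀ n : ℕ, 1 ≤ n → c n / c (n - 1) ≤ c (n + 1) / c n)
    (n : ℕ) : kq c (n+1) ≤ c (n+1) := by
  have h := c_eq_sum c hc0 n
  rw [Finset.sum_range_succ, Nat.sub_self, hc0, mul_one] at h
  have : 0 ≤ ∑ k ∈ Finset.range n, kq c (k+1) * c (n-k) :=
    Finset.sum_nonneg fun k hk =>
      mul_nonneg (kq_nonneg c hpos hc0 hmono k) (hpos (n-k)).le
  linarith

lemma c_le_pow (c : ℕ → ℝ) (hpos : ∀ n, 0 < c n) (hc0 : c 0 = 1)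
    (M : ℝ) (hbdd : ∀ n : ℕ, 1 ≤ n → c n / c (n - 1) ≤ M) (hM : 0 < M) :
    ∀ n, c n ≤ M ^ n := by
  intro n
  induction n with
  | zero => simp [hc0]
  | succ n ih =>
      have h := hbdd (n+1) (by omega)
      simp only [Nat.add_sub_cancel] at h
      have := (div_le_iff₀ (hpos n)).mp h
      calc c (n+1) ≤ M * c n := this
        _ ≤ M * M ^ n := by nlinarith
        _ = M ^ (n+1) := by ring

/-- Kaluza's Lemma (Theorem 1.2): if `c 0 = 1`, all `c n > 0`, and the ratios
`c n / c (n-1)` are non-decreasing and bounded above by `M > 0`, then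
`f z = ∑ c n * z ^ n` converges for `‖z‖ < 1 / M` and `1 - 1 / f z` has a power
series expansion with non-negative coefficients (vanishing constant term). -/
theorem kaluza_lemma (c : ℕ → ℝ) (hpos : ∀ n, 0 < c n) (hc0 : c 0 = 1)
    (M : ℝ) (hM : 0 < M)
    (hmono : ∀ n : ℕ, 1 ≤ n → c n / c (n - 1) ≤ c (n + 1) / c n)
    (hbdd : ∀ n : ℕ, 1 ≤ n → c n / c (n - 1) ≤ M) :
    (∀ z : ℂ, ‖z‖ < 1 / M → Summable (fun n : ℕ => (c n : ℂ) * z ^ n)) ∧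
    ∃ q : ℕ → ℝ, (∀ n : ℕ, 1 ≤ n → 0 ≤ q n) ∧
      ∀ z : ℂ, ‖z‖ < 1 / M →
        1 - 1 / (∑' n : ℕ, (c n : ℂ) * z ^ n) =
          ∑' n : ℕ, (q (n + 1) : ℂ) * z ^ (n + 1) := by
  have hcpow := c_le_pow c hpos hc0 M hbdd hM
  have hqn := kq_nonneg c hpos hc0 hmono
  have hqle := kq_le c hpos hc0 hmono
  -- b coefficients
  set b : ℕ → ℂ := fun n => if n = 0 then 1 else -(kq c n : ℂ) with hb
  have hbnorm : ∀ n, ‖b n‖ ≤ c n := by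
    intro n
    match n with
    | 0 => simp [hb, hc0]
    | (m+1) =>
      simp only [hb, if_neg (Nat.succ_ne_zero m), norm_neg, Complex.norm_real]
      rw [Real.norm_eq_abs, abs_of_nonneg (hqn m)]
      exact hqle m
  -- norms summable
  have hnorm : ∀ z : ℂ, ‖z‖ < 1 / M → ∀ (a : ℕ → ℂ), (∀ n, ‖a n‖ ≤ c n) →
      Summable fun n => ‖a n * z ^ n‖ := by
    intro z hz a ha
    have hz1 : M * ‖z‖ < 1 := by
      rw [lt_div_iff₀ hM] at hz; linarith
    have hz0 : 0 ≤ M * ‖z‖ := mul_nonneg hM.le (norm_nonneg z)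
    apply Summable.of_nonneg_of_le (fun n => norm_nonneg _)
      (fun n => ?_) (summable_geometric_of_lt_one hz0 hz1)
    rw [norm_mul, norm_pow, mul_pow]
    have h1 : ‖a n‖ * ‖z‖ ^ n ≤ M ^ n * ‖z‖ ^ n := by
      have := (ha n).trans (hcpow n)
      exact mul_le_mul_of_nonneg_right this (by positivity)
    exact h1
  have hcnorm : ∀ n : ℕ, ‖((c n : ℂ))‖ ≤ c n := by
    intro n; rw [Complex.norm_real, Real.norm_eq_abs, abs_of_pos (hpos n)]
  constructor
  · intro z hz
    exact Summable.of_norm (hnorm z hz _ hcnorm)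
  refine ⟨kq c, fun n hn => by
    have := hqn (n-1); rwa [show n - 1 + 1 = n from by omega] at this, ?_⟩
  intro z hz
  have hfs : Summable fun n => ‖(c n : ℂ) * z ^ n‖ := hnorm z hz _ hcnorm
  have hgs : Summable fun n => ‖b n * z ^ n‖ := hnorm z hz _ hbnorm
  -- Cauchy product
  have hcauchy := tsum_mul_tsum_eq_tsum_sum_range_of_summable_norm hfs hgs
  have hinner : ∀ n : ℕ,
      (∑ k ∈ Finset.range (n+1), ((c k : ℂ) * z ^ k) * (b (n-k) * z ^ (n-k)))
        = if n = 0 then 1 else 0 := by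
    intro n
    have hzn : ∀ k ∈ Finset.range (n+1),
        ((c k : ℂ) * z ^ k) * (b (n-k) * z ^ (n-k)) = ((c k : ℂ) * b (n-k)) * z ^ n := by
      intro k hk
      have hkn := Finset.mem_range.mp hk
      rw [show n = k + (n - k) from by omega, pow_add,
        show k + (n - k) - k = n - k from by omega]
      ring
    rw [Finset.sum_congr rfl hzn, ← Finset.sum_mul]
    match n with
    | 0 => simp [hb, hc0]
    | (m+1) =>
      simp only [if_neg (Nat.succ_ne_zero m)]
      have hsplit : ∑ k ∈ Finset.range (m+2), (c k : ℂ) * b (m+1-k)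
          = (∑ k ∈ Finset.range (m+1), (c k : ℂ) * b (m+1-k)) + (c (m+1) : ℂ) := by
        rw [Finset.sum_range_succ, Nat.sub_self]
        simp [hb]
      have hneg : ∀ k ∈ Finset.range (m+1), (c k : ℂ) * b (m+1-k)
          = -((kq c (m+1-k) : ℂ) * (c k : ℂ)) := by
        intro k hk
        have hkm := Finset.mem_range.mp hk
        rw [hb]
        simp only [if_neg (show m+1-k ≠ 0 from by omega)]
        ring
      have hrefl : ∑ k ∈ Finset.range (m+1), (kq c (m+1-k) : ℂ) * (c k : ℂ)
          = ∑ k ∈ Finset.range (m+1), (kq c (k+1) : ℂ) * (c (m-k) : ℂ) := by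
        rw [← Finset.sum_range_reflect]
        apply Finset.sum_congr rfl
        intro j hj
        have hj' := Finset.mem_range.mp hj
        rw [show m + 1 - (m + 1 - 1 - j) = j + 1 from by omega,
          show m + 1 - 1 - j = m - j from by omega]
      have hcs : (c (m+1) : ℂ) = ∑ k ∈ Finset.range (m+1), (kq c (k+1) : ℂ) * (c (m-k) : ℂ) := by
        exact_mod_cast congrArg Complex.ofReal (c_eq_sum c hc0 m)
      rw [hsplit, Finset.sum_congr rfl hneg, Finset.sum_neg_distrib, hrefl, ← hcs]
      ring
  rw [tsum_congr hinner, tsum_ite_eq] at hcauchy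
  have hBs : Summable fun n : ℕ => b n * z ^ n := hgs.of_norm
  have hB : (∑' n : ℕ, b n * z ^ n)
      = 1 - ∑' n : ℕ, (kq c (n+1) : ℂ) * z ^ (n+1) := by
    rw [Summable.tsum_eq_zero_add hBs]
    have h0 : b 0 * z ^ 0 = 1 := by simp [hb]
    have h1 : (∑' n : ℕ, b (n+1) * z ^ (n+1))
        = -∑' n : ℕ, (kq c (n+1) : ℂ) * z ^ (n+1) := by
      rw [← tsum_neg]
      exact tsum_congr fun n => by simp [hb]
    rw [h0, h1]; ring
  rw [hB] at hcauchy
  have hinv : 1 - (∑' n : ℕ, (kq c (n+1) : ℂ) * z ^ (n+1))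
      = 1 / ∑' n : ℕ, (c n : ℂ) * z ^ n :=
    eq_one_div_of_mul_eq_one_right hcauchy
  rw [← hinv]; ring
end

section
/- Let {c_n} be a sequence of positive reals with c_0 = 1 such that c_n/c_{n-1} is non-decreasing in n. Define the coefficients {b_n}_{n≥0} by the formal power series identity (∑_{n≥0} c_n z^n)·(∑_{n≥0} b_n z^n) = 1, i.e., b_0 = 1 and ∑_{k=0}^n c_k b_{n-k} = 0 for n ≥ 1. Then b_n ≤ 0 for all n ≥ 1. -/
/-- Combinatorial core of Kaluza's lemma: if `c` is a log-convex sequence of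
positive reals with `c 0 = 1`, and `b` is determined by the formal power series
identity `(∑ c n z^n) * (∑ b n z^n) = 1` (i.e. `b 0 = 1` and the convolution
`∑_{k=0}^n c k * b (n-k) = 0` for `n ≥ 1`), then `b n ≤ 0` for all `n ≥ 1`. -/
theorem kaluza_reciprocal_coeff_nonpos (c b : ℕ → ℝ)
    (hpos : ∀ n, 0 < c n) (hc0 : c 0 = 1)
    (hmono : ∀ n : ℕ, 1 ≤ n → c n / c (n - 1) ≤ c (n + 1) / c n)
    (hb0 : b 0 = 1)
    (hconv : ∀ n : ℕ, 1 ≤ n → ∑ k ∈ Finset.range (n + 1), c k * b (n - k) = 0) :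
    ∀ n : ℕ, 1 ≤ n → b n ≤ 0 := by
  have hR : Monotone (fun m => c (m + 1) / c m) := by
    apply monotone_nat_of_le_succ
    intro m
    simpa using hmono (m + 1) (by omega)
  intro n
  induction n using Nat.strong_induction_on with
  | _ n ih =>
    intro hn
    match n, hn with
    | 1, _ =>
      have h1 := hconv 1 le_rfl
      simp [Finset.sum_range_succ, hc0, hb0] at h1
      nlinarith [hpos 1]
    | (N + 2), _ =>
      set r := c (N + 2) / c (N + 1) with hr
      have h1 := hconv (N + 1) (by omega)
      have h2 := hconv (N + 2) (by omega)
      rw [Finset.sum_range_succ'] at h2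
      simp only [Nat.succ_sub_succ, Nat.sub_zero, hc0, one_mul] at h2
      -- h2 : ∑ k ∈ range (N+2), c (k+1) * b (N+1-k) + b (N+2) = 0
      have e1 : ∑ k ∈ Finset.range (N + 2), r * c k * b (N + 1 - k) = 0 := by
        have : ∑ k ∈ Finset.range (N + 2), r * (c k * b (N + 1 - k)) = 0 := by
          rw [← Finset.mul_sum, h1, mul_zero]
        simpa [mul_assoc] using this
      have key : b (N + 2)
          = ∑ k ∈ Finset.range (N + 2), (r * c k - c (k + 1)) * b (N + 1 - k) := by
        have : ∑ k ∈ Finset.range (N + 2), (r * c k - c (k + 1)) * b (N + 1 - k)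
            = ∑ k ∈ Finset.range (N + 2), r * c k * b (N + 1 - k)
              - ∑ k ∈ Finset.range (N + 2), c (k + 1) * b (N + 1 - k) := by
          rw [← Finset.sum_sub_distrib]
          congr 1; ext k; ring
        rw [this, e1]
        linarith
      rw [key]
      apply Finset.sum_nonpos
      intro k hk
      rw [Finset.mem_range] at hk
      rcases eq_or_lt_of_le (Nat.lt_succ_iff.mp hk) with hkN | hkN
      · -- k = N + 1 : coefficient is zero
        subst hkN
        have : r * c (N + 1) = c (N + 2) := by
          rw [hr, div_mul_cancel₀]
          exact (hpos (N + 1)).ne'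
        simp [this]
      · -- k ≤ N : coefficient ≥ 0, b (N+1-k) ≤ 0
        have hbk : b (N + 1 - k) ≤ 0 := by
          apply ih (N + 1 - k) (by omega) (by omega)
        have hcoef : 0 ≤ r * c k - c (k + 1) := by
          have h := hR (show k ≤ N + 1 by omega)
          simp only at h
          have hck := hpos k
          rw [div_le_div_iff₀ hck (hpos (N + 1))] at h
          have : c (k + 1) ≤ r * c k := by
            rw [hr, div_mul_eq_mul_div, le_div_iff₀ (hpos (N + 1))]
            linarith
          linarith
        exact mul_nonpos_of_nonneg_of_nonpos hcoef hbk
end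

section
/- Let H, H̃ be Hilbert spaces and T̃ : H̃ → H a bounded operator with T̃* a contraction. Let Z : H̃ → H be a bounded operator with ‖Z‖ < 1, so that I_H - Z T̃* is invertible. Define Δ := (I - T̃T̃*)^{1/2}, D := (I - T̃*T̃)^{1/2}, and θ(Z) := -T̃ + Δ (I - Z T̃*)^{-1} Z D. Then for any two such operators Z, W (both of norm < 1): I - θ(Z) θ(W)* = Δ (I - Z T̃*)^{-1} (I - Z W*) (I - T̃ W*)^{-1} Δ. -/
open ContinuousLinearMap

open Polynomial

section aux
variable {H H' : Type*}
    [NormedAddCommGroup H] [InnerProductSpace ℂ H] [CompleteSpace H]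
    [NormedAddCommGroup H'] [InnerProductSpace ℂ H'] [CompleteSpace H']

/-- polynomials intertwine -/
lemma aux_pow_comm (T : H' →L[ℂ] H) (a : H' →L[ℂ] H') (b : H →L[ℂ] H)
    (hab : T ∘L a = b ∘L T) (n : ℕ) : T ∘L (a ^ n) = (b ^ n) ∘L T := by
  induction n with
  | zero => simp [pow_zero, one_def]
  | succ n ih =>
      rw [pow_succ, pow_succ, mul_def, mul_def, ← ContinuousLinearMap.comp_assoc, ih, ContinuousLinearMap.comp_assoc, hab, ← ContinuousLinearMap.comp_assoc]

lemma aux_aeval_comm (T : H' →L[ℂ] H) (a : H' →L[ℂ] H') (b : H →L[ℂ] H)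
    (hab : T ∘L a = b ∘L T) (q : ℝ[X]) :
    T ∘L aeval a q = aeval b q ∘L T := by
  induction q using Polynomial.induction_on' with
  | add p r hp hr => rw [map_add, map_add, comp_add, ContinuousLinearMap.add_comp, hp, hr]
  | monomial n c =>
      rw [aeval_monomial, aeval_monomial, Algebra.algebraMap_eq_smul_one,
        Algebra.algebraMap_eq_smul_one, smul_mul_assoc, one_mul, smul_mul_assoc, one_mul,
        comp_smul, ContinuousLinearMap.smul_comp, aux_pow_comm T a b hab n]
end aux

section aux2
set_option linter.unusedSectionVars false
variable {H H' : Type*}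
    [NormedAddCommGroup H] [InnerProductSpace ℂ H] [CompleteSpace H]
    [NormedAddCommGroup H'] [InnerProductSpace ℂ H'] [CompleteSpace H']

lemma aux_sqrt_of_sq (d : H →L[ℂ] H) (hd : d.IsPositive) :
    cfc Real.sqrt (d ∘L d) = d := by
  have hd0 : (0 : H →L[ℂ] H) ≤ d := d.nonneg_iff_isPositive.mpr hd
  have hsa : IsSelfAdjoint d := hd.isSelfAdjoint
  have h1 : d ∘L d = cfc (fun x : ℝ => x * x) d := by
    rw [cfc_mul (fun x : ℝ => x) (fun x : ℝ => x) d, cfc_id' ℝ d, mul_def]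
  rw [h1, ← cfc_comp' Real.sqrt (fun x : ℝ => x * x) d]
  · calc cfc (fun x : ℝ => Real.sqrt (x * x)) d
        = cfc (fun x : ℝ => x) d := by
          apply cfc_congr
          intro x hx
          have hx0 : 0 ≤ x := spectrum_nonneg_of_nonneg hd0 hx
          simp [Real.sqrt_mul_self hx0]
      _ = d := cfc_id' ℝ d

end aux2

section aux3
set_option linter.unusedSectionVars false
variable {H H' : Type*}
    [NormedAddCommGroup H] [InnerProductSpace ℂ H] [CompleteSpace H]
    [NormedAddCommGroup H'] [InnerProductSpace ℂ H'] [CompleteSpace H']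

set_option maxHeartbeats 1000000 in
lemma aux_sqrt_comm (T : H' →L[ℂ] H) (a : H' →L[ℂ] H') (b : H →L[ℂ] H)
    (ha : a.IsPositive) (hb : b.IsPositive) (hab : T ∘L a = b ∘L T) :
    T ∘L cfc Real.sqrt a = cfc Real.sqrt b ∘L T := by
  have ha0 : (0 : H' →L[ℂ] H') ≤ a := a.nonneg_iff_isPositive.mpr ha
  have hb0 : (0 : H →L[ℂ] H) ≤ b := b.nonneg_iff_isPositive.mpr hb
  set M : ℝ := max ‖a‖ ‖b‖ with hM_def
  have hM : (0 : ℝ) ≤ M := le_trans (norm_nonneg a) (le_max_left _ _)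
  have hspec_a : spectrum ℝ a ⊆ Set.Icc 0 M := by
    intro x hx
    refine ⟨spectrum_nonneg_of_nonneg ha0 hx, ?_⟩
    have h1 : ‖x‖ ≤ ‖a‖ * ‖(1 : H' →L[ℂ] H')‖ := spectrum.norm_le_norm_mul_of_mem hx
    have h2 : ‖(1 : H' →L[ℂ] H')‖ ≤ 1 := by rw [one_def]; exact norm_id_le
    calc x ≤ ‖x‖ := le_abs_self x
      _ ≤ ‖a‖ * ‖(1 : H' →L[ℂ] H')‖ := h1
      _ ≤ ‖a‖ * 1 := by nlinarith [norm_nonneg a]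
      _ ≤ M := by rw [mul_one]; exact le_max_left _ _
  have hspec_b : spectrum ℝ b ⊆ Set.Icc 0 M := by
    intro x hx
    refine ⟨spectrum_nonneg_of_nonneg hb0 hx, ?_⟩
    have h1 : ‖x‖ ≤ ‖b‖ * ‖(1 : H →L[ℂ] H)‖ := spectrum.norm_le_norm_mul_of_mem hx
    have h2 : ‖(1 : H →L[ℂ] H)‖ ≤ 1 := by rw [one_def]; exact norm_id_le
    calc x ≤ ‖x‖ := le_abs_self x
      _ ≤ ‖b‖ * ‖(1 : H →L[ℂ] H)‖ := h1
      _ ≤ ‖b‖ * 1 := by nlinarith [norm_nonneg b]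
      _ ≤ M := by rw [mul_one]; exact le_max_right _ _
  -- it suffices to bound the norm of the difference by every positive ε
  have key : ∀ ε : ℝ, 0 < ε → ‖T ∘L cfc Real.sqrt a - cfc Real.sqrt b ∘L T‖ ≤ ε := by
    intro ε hε
    set ε' : ℝ := ε / (2 * (‖T‖ + 1)) with hε'_def
    have hT1 : (0:ℝ) < ‖T‖ + 1 := by positivity
    have hε' : 0 < ε' := by positivity
    -- Weierstrass approximation of sqrt on [0, M]
    obtain ⟨q, hq⟩ : ∃ q : ℝ[X], ∀ x ∈ Set.Icc (0:ℝ) M, |Real.sqrt x - q.eval x| ≤ ε' := by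
      set f : C(Set.Icc (0:ℝ) M, ℝ) :=
        ⟨fun x => Real.sqrt x, Real.continuous_sqrt.comp continuous_subtype_val⟩ with hf_def
      have hmem : f ∈ (polynomialFunctions (Set.Icc (0:ℝ) M)).topologicalClosure := by
        rw [polynomialFunctions_closure_eq_top]; trivial
      have hcl : f ∈ closure ((polynomialFunctions (Set.Icc (0:ℝ) M)) : Set _) := hmem
      obtain ⟨g, hg_mem, hg_dist⟩ := Metric.mem_closure_iff.mp hcl ε' hε'
      obtain ⟨q, -, hq_eq⟩ := Subalgebra.mem_map.mp hg_mem
      subst hq_eq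
      refine ⟨q, fun x hx => ?_⟩
      have h3 := ContinuousMap.dist_apply_le_dist
        (f := f) (g := (Polynomial.toContinuousMapOnAlgHom (Set.Icc (0:ℝ) M) q)) ⟨x, hx⟩
      have heval : (Polynomial.toContinuousMapOnAlgHom (Set.Icc (0:ℝ) M) q)
          (⟨x, hx⟩ : Set.Icc (0:ℝ) M) = q.eval x := by
        simp [Polynomial.toContinuousMapOnAlgHom_apply, Polynomial.toContinuousMapOn_apply,
          Polynomial.toContinuousMap_apply]
      rw [heval] at h3
      have h4 : dist (Real.sqrt x) (q.eval x) ≤ ε' := le_trans h3 (le_of_lt hg_dist)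
      rwa [Real.dist_eq] at h4
    -- norm bounds
    have hna : ‖cfc Real.sqrt a - aeval a q‖ ≤ ε' := by
      rw [← cfc_polynomial q a ha.isSelfAdjoint, ← cfc_sub Real.sqrt q.eval a]
      exact norm_cfc_le (le_of_lt hε') fun x hx => by
        simpa [Real.norm_eq_abs] using hq x (hspec_a hx)
    have hnb : ‖cfc Real.sqrt b - aeval b q‖ ≤ ε' := by
      rw [← cfc_polynomial q b hb.isSelfAdjoint, ← cfc_sub Real.sqrt q.eval b]
      exact norm_cfc_le (le_of_lt hε') fun x hx => by
        simpa [Real.norm_eq_abs] using hq x (hspec_b hx)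
    have hcomm := aux_aeval_comm T a b hab q
    have hsplit : T ∘L cfc Real.sqrt a - cfc Real.sqrt b ∘L T
        = T ∘L (cfc Real.sqrt a - aeval a q) - (cfc Real.sqrt b - aeval b q) ∘L T := by
      rw [comp_sub, ContinuousLinearMap.sub_comp, hcomm]; abel
    rw [hsplit]
    calc ‖T ∘L (cfc Real.sqrt a - aeval a q) - (cfc Real.sqrt b - aeval b q) ∘L T‖
        ≤ ‖T ∘L (cfc Real.sqrt a - aeval a q)‖ + ‖(cfc Real.sqrt b - aeval b q) ∘L T‖ :=
          norm_sub_le _ _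
      _ ≤ ‖T‖ * ε' + ε' * ‖T‖ := by
          gcongr
          · exact le_trans (opNorm_comp_le _ _) (by nlinarith [norm_nonneg T])
          · exact le_trans (opNorm_comp_le _ _) (by nlinarith [norm_nonneg T])
      _ ≤ ε := by
          have hcan : ε' * (2 * (‖T‖ + 1)) = ε :=
            div_mul_cancel₀ _ (ne_of_gt (by positivity))
          nlinarith [norm_nonneg T, hε'.le]
  by_contra hne
  have hpos : 0 < ‖T ∘L cfc Real.sqrt a - cfc Real.sqrt b ∘L T‖ := by
    rw [norm_pos_iff]
    exact sub_ne_zero_of_ne hne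
  have := key (‖T ∘L cfc Real.sqrt a - cfc Real.sqrt b ∘L T‖ / 2) (by positivity)
  linarith
end aux3

lemma aux_ring_id {R : Type*} [Ring R] (p q a b c δ : R) (hp : p * (1 - a) = 1)
    (hq : (1 - b) * q = 1) :
    δ * δ + δ * (b * (q * δ)) + δ * (p * (a * δ)) - δ * (p * ((c - a * b) * (q * δ)))
      = δ * (p * ((1 - c) * (q * δ))) := by
  have h1 : δ * δ = δ * ((p * (1 - a)) * (((1 - b) * q) * δ)) := by rw [hp, hq]; simp
  have h2 : δ * (b * (q * δ)) = δ * ((p * (1 - a)) * (b * (q * δ))) := by rw [hp]; simp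
  have h3 : δ * (p * (a * δ)) = δ * (p * (a * (((1 - b) * q) * δ))) := by rw [hq]; simp
  rw [h1, h2, h3]
  noncomm_ring


set_option maxHeartbeats 1000000 in
/-- The characteristic-function kernel identity (Lemma 4.8, abstract form).
With `T̃ : H̃ → H` such that `T̃*` is a contraction, `Δ = (I - T̃T̃*)^{1/2}`,
`D = (I - T̃*T̃)^{1/2}`, and `θ(Z) = -T̃ + Δ (I - Z T̃*)⁻¹ Z D` for `‖Z‖ < 1`,
one has `I - θ(Z) θ(W)* = Δ (I - Z T̃*)⁻¹ (I - Z W*) (I - T̃ W*)⁻¹ Δ`. -/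
theorem characteristic_function_kernel_identity {H H' : Type*}
    [NormedAddCommGroup H] [InnerProductSpace ℂ H] [CompleteSpace H]
    [NormedAddCommGroup H'] [InnerProductSpace ℂ H'] [CompleteSpace H']
    (T : H' →L[ℂ] H) (hT : ‖ContinuousLinearMap.adjoint T‖ ≤ 1)
    (Δ : H →L[ℂ] H) (D : H' →L[ℂ] H')
    (hΔpos : Δ.IsPositive) (hDpos : D.IsPositive)
    (hΔ : Δ ∘L Δ = 1 - T ∘L ContinuousLinearMap.adjoint T)
    (hD : D ∘L D = 1 - ContinuousLinearMap.adjoint T ∘L T)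
    (Z W : H' →L[ℂ] H) (hZ : ‖Z‖ < 1) (hW : ‖W‖ < 1)
    (θ : (H' →L[ℂ] H) → (H' →L[ℂ] H))
    (hθ : ∀ Y : H' →L[ℂ] H, θ Y = -T +
      Δ ∘L Ring.inverse (1 - Y ∘L ContinuousLinearMap.adjoint T) ∘L Y ∘L D) :
    1 - θ Z ∘L ContinuousLinearMap.adjoint (θ W) =
      Δ ∘L Ring.inverse (1 - Z ∘L ContinuousLinearMap.adjoint T) ∘L
        (1 - Z ∘L ContinuousLinearMap.adjoint W) ∘L
        Ring.inverse (1 - T ∘L ContinuousLinearMap.adjoint W) ∘L Δ := by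
  have hTn : ‖T‖ ≤ 1 := by
    rwa [(ContinuousLinearMap.adjoint (𝕜 := ℂ) (E := H') (F := H)).norm_map T] at hT
  have hWn : ‖adjoint W‖ = ‖W‖ :=
    (ContinuousLinearMap.adjoint (𝕜 := ℂ) (E := H') (F := H)).norm_map W
  have hA : ‖Z ∘L adjoint T‖ < 1 := by
    refine lt_of_le_of_lt (opNorm_comp_le _ _) ?_
    nlinarith [norm_nonneg Z, norm_nonneg (adjoint T)]
  have hwn : ‖W ∘L adjoint T‖ < 1 := by
    refine lt_of_le_of_lt (opNorm_comp_le _ _) ?_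
    nlinarith [norm_nonneg W, norm_nonneg (adjoint T)]
  have hB : ‖T ∘L adjoint W‖ < 1 := by
    refine lt_of_le_of_lt (opNorm_comp_le _ _) ?_
    rw [hWn]
    nlinarith [norm_nonneg T, norm_nonneg W]
  set u : (H →L[ℂ] H)ˣ := Units.oneSub (Z ∘L adjoint T) hA with hu_def
  set w : (H →L[ℂ] H)ˣ := Units.oneSub (W ∘L adjoint T) hwn with hw_def
  set v : (H →L[ℂ] H)ˣ := Units.oneSub (T ∘L adjoint W) hB with hv_def
  set P : H →L[ℂ] H := ↑u⁻¹ with hP_def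
  set Q : H →L[ℂ] H := ↑v⁻¹ with hQ_def
  have hp : P * (1 - Z ∘L adjoint T) = 1 := by
    have h := u.inv_mul
    rwa [hu_def, Units.val_oneSub] at h
  have hq : (1 - T ∘L adjoint W) * Q = 1 := by
    have h := v.mul_inv
    rwa [hv_def, Units.val_oneSub] at h
  have hinvZ : Ring.inverse (1 - Z ∘L adjoint T) = P := NormedRing.inverse_one_sub _ hA
  have hinvW : Ring.inverse (1 - W ∘L adjoint T) = (↑w⁻¹ : H →L[ℂ] H) :=
    NormedRing.inverse_one_sub _ hwn
  have hinvB : Ring.inverse (1 - T ∘L adjoint W) = Q := NormedRing.inverse_one_sub _ hB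
  -- selfadjointness
  have hDsa : adjoint D = D := by rw [← star_eq_adjoint]; exact hDpos.isSelfAdjoint
  have hΔsa : adjoint Δ = Δ := by rw [← star_eq_adjoint]; exact hΔpos.isSelfAdjoint
  -- adjoint of the w-inverse
  have hone : adjoint (1 : H →L[ℂ] H) = 1 := by rw [← star_eq_adjoint]; exact star_one _
  have hwv : adjoint (↑w : H →L[ℂ] H) = ↑v := by
    rw [hw_def, hv_def, Units.val_oneSub, Units.val_oneSub, map_sub, hone, adjoint_comp,
      adjoint_adjoint]
  have hadj_winv : adjoint (↑w⁻¹ : H →L[ℂ] H) = Q := by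
    have h1 : adjoint (↑w⁻¹ : H →L[ℂ] H) * ↑v = 1 := by
      rw [← hwv, mul_def, ← adjoint_comp, ← mul_def, w.mul_inv, hone]
    exact left_inv_eq_right_inv h1 v.mul_inv
  -- intertwining relations
  have hDD : (0 : H' →L[ℂ] H') ≤ D ∘L D := by
    have h := star_mul_self_nonneg D
    rwa [hDpos.isSelfAdjoint.star_eq, mul_def] at h
  have hΔΔ : (0 : H →L[ℂ] H) ≤ Δ ∘L Δ := by
    have h := star_mul_self_nonneg Δ
    rwa [hΔpos.isSelfAdjoint.star_eq, mul_def] at h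
  have key : T ∘L D = Δ ∘L T := by
    have e1 : cfc Real.sqrt (D ∘L D) = D := aux_sqrt_of_sq D hDpos
    have e2 : cfc Real.sqrt (Δ ∘L Δ) = Δ := aux_sqrt_of_sq Δ hΔpos
    rw [← e1, ← e2, hD, hΔ]
    refine aux_sqrt_comm T _ _ ?_ ?_ ?_
    · rw [← hD]; exact (nonneg_iff_isPositive _).mp hDD
    · rw [← hΔ]; exact (nonneg_iff_isPositive _).mp hΔΔ
    · simp only [comp_sub, ContinuousLinearMap.sub_comp, one_def, comp_id, id_comp,
        ContinuousLinearMap.comp_assoc]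
  have key_adj : D ∘L adjoint T = adjoint T ∘L Δ := by
    have h := congrArg (ContinuousLinearMap.adjoint (𝕜 := ℂ)) key
    rwa [adjoint_comp, adjoint_comp, hDsa, hΔsa] at h
  -- the two factors of the product expanded
  have hθZ' : θ Z = -T + Δ ∘L (P ∘L (Z ∘L D)) := by rw [hθ Z, hinvZ]
  have hθW_adj : adjoint (θ W) = -adjoint T + D ∘L (adjoint W ∘L (Q ∘L Δ)) := by
    rw [hθ W, hinvW, map_add, map_neg]
    simp only [adjoint_comp, hDsa, hΔsa, hadj_winv, ContinuousLinearMap.comp_assoc]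
  have main_exp : 1 - θ Z ∘L adjoint (θ W) =
      (1 - T ∘L adjoint T)
      + T ∘L (D ∘L (adjoint W ∘L (Q ∘L Δ)))
      + (Δ ∘L (P ∘L (Z ∘L D))) ∘L adjoint T
      - (Δ ∘L (P ∘L (Z ∘L D))) ∘L (D ∘L (adjoint W ∘L (Q ∘L Δ))) := by
    rw [hθZ', hθW_adj]
    simp only [comp_add, ContinuousLinearMap.add_comp, ContinuousLinearMap.neg_comp, comp_neg, neg_neg]
    abel
  have t2 : T ∘L (D ∘L (adjoint W ∘L (Q ∘L Δ))) = Δ ∘L (T ∘L (adjoint W ∘L (Q ∘L Δ))) := by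
    rw [← ContinuousLinearMap.comp_assoc, key, ContinuousLinearMap.comp_assoc]
  have t3 : (Δ ∘L (P ∘L (Z ∘L D))) ∘L adjoint T = Δ ∘L (P ∘L (Z ∘L (adjoint T ∘L Δ))) := by
    simp only [ContinuousLinearMap.comp_assoc]
    rw [key_adj]
  have t4 : (Δ ∘L (P ∘L (Z ∘L D))) ∘L (D ∘L (adjoint W ∘L (Q ∘L Δ)))
      = Δ ∘L (P ∘L (Z ∘L (adjoint W ∘L (Q ∘L Δ))))
        - Δ ∘L (P ∘L (Z ∘L (adjoint T ∘L (T ∘L (adjoint W ∘L (Q ∘L Δ)))))) := by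
    simp only [ContinuousLinearMap.comp_assoc]
    rw [← ContinuousLinearMap.comp_assoc D D, hD]
    simp only [ContinuousLinearMap.sub_comp, one_def, id_comp, comp_sub,
      ContinuousLinearMap.comp_assoc]
  have final : Δ ∘L Δ + Δ ∘L ((T ∘L adjoint W) ∘L (Q ∘L Δ)) + Δ ∘L (P ∘L ((Z ∘L adjoint T) ∘L Δ))
      - Δ ∘L (P ∘L (((Z ∘L adjoint W) - (Z ∘L adjoint T) ∘L (T ∘L adjoint W)) ∘L (Q ∘L Δ)))
      = Δ ∘L (P ∘L ((1 - Z ∘L adjoint W) ∘L (Q ∘L Δ))) := by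
    simpa only [mul_def] using
      aux_ring_id P Q (Z ∘L adjoint T) (T ∘L adjoint W) (Z ∘L adjoint W) Δ hp hq
  rw [hinvZ, hinvB, main_exp, t2, t3, t4, ← hΔ]
  simp only [comp_sub, ContinuousLinearMap.sub_comp, ContinuousLinearMap.comp_assoc, one_def,
    id_comp] at final ⊢
  rw [← final]
end
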